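/- Under the saw map setup, the set Σ is a chaotic invariant set for T. -/

import Mathlib

/-!
Away from `0`, `T` is piecewise affine, so a point `w ≠ 0` of `Ω` has a left neighbourhood `[l, w]`
that `T^[n]` (`n` the first time the orbit of `w` hits `0`) maps affinely onto some `[0, L]`.
Conversely, iterates of the expanding branch `[q (k+1), r k]`, which repels from its fixed point
`e k`, map a subinterval of any `[0, L]` with `L > e k` affinely onto `[0, p k]`; as
`e (k-1) < p k` for `k > kstar`, these maps chain down to `J* = [0, p kstar]`. Hence every point
of `Σ` has arbitrarily small intervals that an iterate of `T` maps affinely onto `J*`, and pulling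
`Ω` back along them gives the three properties: the contracting inverse branch has a fixed point,
a limit of points of `Ω`; the preimages of `0` and of `q (kstar+1)` are far apart after `N` steps;
nested preimages, intersected with the compact set `Σ`, shrink to a point with dense orbit.
-/

/-- `T` is affine (linear) on the segment `[a, b]`. -/
def AffOn (T : ℝ → ℝ) (a b : ℝ) : Prop :=
  ∃ m c : ℝ, ∀ x ∈ Set.Icc a b, T x = m * x + c

/-- The "saw map" setup: sequences `q, r, p`, the map `T`, fixed points `e k ∈ (q (k+1), r k)`
and `ehat k ∈ (r k, q k)`, and the index `kstar`, subject to all standing assumptions. -/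
structure SawMapSetup where
  q : ℕ → ℝ
  r : ℕ → ℝ
  p : ℕ → ℝ
  T : ℝ → ℝ
  e : ℕ → ℝ
  ehat : ℕ → ℝ
  kstar : ℕ
  hq_pos : ∀ k, 1 ≤ k → 0 < q k
  hr_pos : ∀ k, 0 < r k
  hq1r0 : q 1 < r 0
  hrq : ∀ k, 1 ≤ k → r k < q k
  hqr : ∀ k, 1 ≤ k → q (k + 1) < r k
  hq_lim : Filter.Tendsto q Filter.atTop (nhds 0)
  hr_lim : Filter.Tendsto r Filter.atTop (nhds 0)
  hp_pos : ∀ k, 0 < p k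
  hp_dec : ∀ k, p (k + 1) < p k
  hp0r0 : p 0 < r 0
  hpr : ∀ k, 1 ≤ k → r k < p k
  hT0 : T 0 = 0
  hTq : ∀ k, 1 ≤ k → T (q k) = 0
  hTr : ∀ k, T (r k) = p k
  haff0 : AffOn T (q 1) (r 0)
  haff1 : ∀ k, 1 ≤ k → AffOn T (q (k + 1)) (r k)
  haff2 : ∀ k, 1 ≤ k → AffOn T (r k) (q k)
  hTJ : Set.MapsTo T (Set.Icc 0 (r 0)) (Set.Icc 0 (r 0))
  halpha1 : ∀ k, 1 ≤ k → 1 < p k / (r k - q (k + 1))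
  he_mem : ∀ k, 1 ≤ k → e k ∈ Set.Ioo (q (k + 1)) (r k)
  he_fix : ∀ k, 1 ≤ k → T (e k) = e k
  he_uniq : ∀ k, 1 ≤ k → ∀ x ∈ Set.Ioo (q (k + 1)) (r k), T x = x → x = e k
  hehat_mem : ∀ k, 1 ≤ k → ehat k ∈ Set.Ioo (r k) (q k)
  hehat_fix : ∀ k, 1 ≤ k → T (ehat k) = ehat k
  hehat_uniq : ∀ k, 1 ≤ k → ∀ x ∈ Set.Ioo (r k) (q k), T x = x → x = ehat k
  halpha_mono : ∀ k, p k / (r k - q (k + 1)) < p (k + 1) / (r (k + 1) - q (k + 2))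
  hbeta_mono : ∀ k, 1 ≤ k → p k / (q k - r k) < p (k + 1) / (q (k + 1) - r (k + 1))
  hkstar : 1 ≤ kstar
  hp_e_big : ∀ k, kstar + 1 ≤ k → e (k - 1) < p k
  hp_e_small : 2 ≤ kstar → ∀ k, 2 ≤ k → k ≤ kstar → p k < e (k - 1)
  htech : ∀ k, 1 ≤ k → k < kstar → p k < q k + e k / (p (k - 1) / (r (k - 1) - q k))

namespace SawMapSetup

variable (S : SawMapSetup)

/-- Absolute value of the slope of `T` on `[q (k+1), r k]`. -/
noncomputable def alpha (k : ℕ) : ℝ := S.p k / (S.r k - S.q (k + 1))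

/-- Absolute value of the slope of `T` on `[r k, q k]`. -/
noncomputable def beta (k : ℕ) : ℝ := S.p k / (S.q k - S.r k)

/-- The invariant segment `J* = [0, p kstar]`. -/
def Jstar : Set ℝ := Set.Icc 0 (S.p S.kstar)

/-- The segment `J_k = [e k, p k]`. -/
def Jk (k : ℕ) : Set ℝ := Set.Icc (S.e k) (S.p k)

/-- The segment `G_k = [T (p k), p k]`. -/
def Gk (k : ℕ) : Set ℝ := Set.Icc (S.T (S.p k)) (S.p k)

/-- The set `Ω` of points of `J*` that are eventually mapped to `0`. -/
def Omega : Set ℝ := {x | x ∈ S.Jstar ∧ ∃ n, 1 ≤ n ∧ S.T^[n] x = 0}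

/-- The set `Σ`, the closure of `Ω`. -/
def Sig : Set ℝ := closure S.Omega

end SawMapSetup

/-- `A` is a chaotic invariant set for `T`: `A` is closed and invariant, periodic points of
`T` are dense in `A`, `T` has sensitive dependence on initial conditions on `A`, and some
point of `A` has a dense forward orbit in `A`. -/
def IsChaoticInvariantSet (T : ℝ → ℝ) (A : Set ℝ) : Prop :=
  IsClosed A ∧ Set.MapsTo T A A ∧
    (∀ x ∈ A, ∀ ε > 0, ∃ y ∈ A, |x - y| < ε ∧ ∃ n, 1 ≤ n ∧ T^[n] y = y) ∧
    (∃ b > 0, ∀ x ∈ A, ∀ ε > 0, ∃ y ∈ A, |x - y| < ε ∧ ∃ k : ℕ, b < |T^[k] x - T^[k] y|) ∧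
    (∃ z ∈ A, ∀ x ∈ A, ∀ ε > 0, ∃ n : ℕ, |T^[n] z - x| < ε)

open Set Filter Topology

section AffineBranches

variable {f g : ℝ → ℝ} {I J I' J' : Set ℝ}

def AffineOnto (f : ℝ → ℝ) (I J : Set ℝ) : Prop :=
  ∃ m c : ℝ, m ≠ 0 ∧ EqOn f (fun t => m * t + c) I ∧ f '' I = J

theorem affineOnto_id (I : Set ℝ) : AffineOnto id I I :=
  ⟨1, 0, one_ne_zero, fun t _ => by simp, image_id I⟩

theorem image_affine_uIcc (m c a b : ℝ) :
    (fun t => m * t + c) '' uIcc a b = uIcc (m * a + c) (m * b + c) := by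
  have : (fun t => m * t + c) = (· + c) ∘ (m * ·) := rfl
  rw [this, image_comp, image_const_mul_uIcc, image_add_const_uIcc]

theorem affineOnto_Icc {a b m c : ℝ} (hab : a ≤ b) (hm : m ≠ 0)
    (hf : EqOn f (fun t => m * t + c) (Icc a b)) : AffineOnto f (Icc a b) (uIcc (f a) (f b)) := by
  refine ⟨m, c, hm, hf, ?_⟩
  rw [hf.image_eq, ← uIcc_of_le hab, image_affine_uIcc, hf ⟨le_rfl, hab⟩, hf ⟨hab, le_rfl⟩]

theorem AffineOnto.comp (hg : AffineOnto g I' J') (hf : AffineOnto f I J) (hI' : I' ⊆ J) :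
    AffineOnto (g ∘ f) (I ∩ f ⁻¹' I') J' := by
  obtain ⟨m, c, hm, hfA, hfI⟩ := hf
  obtain ⟨m', c', hm', hgA, hgI⟩ := hg
  refine ⟨m' * m, m' * c + c', mul_ne_zero hm' hm, fun t ht => ?_, ?_⟩
  · simp only [Function.comp_apply]
    rw [hgA ht.2, hfA ht.1]
    ring
  · rw [image_comp, image_inter_preimage, hfI, inter_eq_right.2 hI', hgI]

/-- An affine bijection identifies `I` with the preimage of `J`. -/
theorem AffineOnto.isClosed (h : AffineOnto f I J) (hJ : IsClosed J) : IsClosed I := by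
  obtain ⟨m, c, hm, hfA, rfl⟩ := h
  have hI : (fun t => m * t + c) ⁻¹' (f '' I) = I := by
    refine Subset.antisymm ?_ fun t ht => ⟨t, ht, hfA ht⟩
    rintro t ⟨s, hs, hst⟩
    rw [hfA hs] at hst
    obtain rfl : s = t := mul_left_cancel₀ hm (add_right_cancel hst)
    exact hs
  rw [← hI]
  exact hJ.preimage (by fun_prop)

theorem AffineOnto.exists_one_lt_abs_slope {a b : ℝ} (h : AffineOnto f I J) (ha : a ∈ J)
    (hb : b ∈ J) (hI : ∀ t ∈ I, ∀ t' ∈ I, |t - t'| < |a - b|) :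
    ∃ m c : ℝ, 1 < |m| ∧ EqOn f (fun t => m * t + c) I := by
  obtain ⟨m, c, -, hfA, rfl⟩ := h
  obtain ⟨t, ht, rfl⟩ := ha
  obtain ⟨t', ht', rfl⟩ := hb
  have hdist : |f t - f t'| = |m| * |t - t'| := by
    rw [hfA ht, hfA ht', ← abs_mul]
    ring_nf
  have hlt := hI t ht t' ht'
  refine ⟨m, c, ?_, hfA⟩
  rw [hdist] at hlt
  have : 0 < |t - t'| := by nlinarith [abs_nonneg m, abs_nonneg (t - t')]
  nlinarith

theorem contractingWith_affine_inverse {m : ℝ} (hm : 1 < |m|) (c : ℝ) :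
    ContractingWith ‖m‖₊⁻¹ fun z => (z - c) / m := by
  refine ⟨inv_lt_one_of_one_lt₀ ?_, LipschitzWith.of_dist_le_mul fun a b => le_of_eq ?_⟩
  · rwa [← NNReal.coe_lt_coe, coe_nnnorm, Real.norm_eq_abs, NNReal.coe_one]
  · rw [NNReal.coe_inv, coe_nnnorm, Real.norm_eq_abs, Real.dist_eq, Real.dist_eq, ← abs_inv,
      ← abs_mul]
    ring_nf

/-- The fixed point of the contracting inverse branch is the limit of backward orbits of points
of `D`. -/
theorem exists_isFixedPt_mem_closure {D : Set ℝ} {m c : ℝ} (hm : 1 < |m|)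
    (hf : EqOn f (fun t => m * t + c) I) (hI : IsClosed I) (hD : D.Nonempty)
    (hback : ∀ z ∈ D, ∃ y ∈ I ∩ D, f y = z) : ∃ y ∈ I ∩ closure D, f y = y := by
  have hm0 : m ≠ 0 := abs_pos.1 (one_pos.trans hm)
  set ψ : ℝ → ℝ := fun z => (z - c) / m
  have hψ : ∀ z ∈ D, ψ z ∈ I ∩ D := by
    intro z hz
    obtain ⟨y, hy, rfl⟩ := hback z hz
    convert hy using 1
    simp only [ψ, hf hy.1]
    field_simp
    ring
  have hK := contractingWith_affine_inverse hm c
  obtain ⟨z, hz⟩ := hD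
  have hmem : ∀ n, ψ^[n + 1] z ∈ I ∩ D := by
    intro n
    induction n with
    | zero => exact hψ z hz
    | succ n ih =>
      rw [Function.iterate_succ_apply']
      exact hψ _ ih.2
  set y := ContractingWith.fixedPoint ψ hK
  have hlim : Tendsto (fun n => ψ^[n + 1] z) atTop (𝓝 y) :=
    (hK.tendsto_iterate_fixedPoint z).comp (tendsto_add_atTop_nat 1)
  have hyI : y ∈ I := hI.mem_of_tendsto hlim (Eventually.of_forall fun n => (hmem n).1)
  refine ⟨y, ⟨hyI, mem_closure_of_tendsto hlim (Eventually.of_forall fun n => (hmem n).2)⟩, ?_⟩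
  have hfix : (y - c) / m = y := hK.fixedPoint_isFixedPt
  rw [hf hyI]
  field_simp at hfix
  linarith

end AffineBranches

section AffineGerms

variable {f g : ℝ → ℝ} {x : ℝ}

def HasAffineGermWithin (f : ℝ → ℝ) (s : Set ℝ) (x : ℝ) : Prop :=
  ∃ m c : ℝ, m ≠ 0 ∧ f =ᶠ[𝓝[s] x] fun t => m * t + c

def IsPiecewiseAffineAt (f : ℝ → ℝ) (x : ℝ) : Prop :=
  HasAffineGermWithin f (Iic x) x ∧ HasAffineGermWithin f (Ici x) x

theorem isPiecewiseAffineAt_id : IsPiecewiseAffineAt id x :=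
  ⟨⟨1, 0, one_ne_zero, Eventually.of_forall fun t => by simp⟩,
    ⟨1, 0, one_ne_zero, Eventually.of_forall fun t => by simp⟩⟩

theorem HasAffineGermWithin.continuousWithinAt {s : Set ℝ} (h : HasAffineGermWithin f s x)
    (hx : x ∈ s) : ContinuousWithinAt f s x := by
  obtain ⟨m, c, -, hfA⟩ := h
  exact (by fun_prop : Continuous fun t => m * t + c).continuousWithinAt.congr_of_eventuallyEq
    hfA (hfA.eq_of_nhdsWithin hx)

theorem IsPiecewiseAffineAt.continuousAt (h : IsPiecewiseAffineAt f x) : ContinuousAt f x :=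
  continuousAt_iff_continuous_left_right.2
    ⟨h.1.continuousWithinAt self_mem_Iic, h.2.continuousWithinAt self_mem_Ici⟩

theorem HasAffineGermWithin.comp {s t : Set ℝ} {m c : ℝ} (hg : HasAffineGermWithin g t (f x))
    (hm : m ≠ 0) (hf : f =ᶠ[𝓝[s] x] fun y => m * y + c) (hx : x ∈ s)
    (hst : MapsTo (fun y => m * y + c) s t) : HasAffineGermWithin (g ∘ f) s x := by
  obtain ⟨m', c', hm', hgA⟩ := hg
  have hfx : f x = m * x + c := hf.eq_of_nhdsWithin hx
  have htend : Tendsto f (𝓝[s] x) (𝓝[t] (f x)) := by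
    rw [hfx]
    exact ((by fun_prop : Continuous fun y => m * y + c).continuousWithinAt.tendsto_nhdsWithin
      hst).congr' hf.symm
  refine ⟨m' * m, m' * c + c', mul_ne_zero hm' hm, ?_⟩
  filter_upwards [hgA.comp_tendsto htend, hf] with y hgy hfy
  simp only [Function.comp_apply] at hgy ⊢
  rw [hgy, hfy]
  ring

theorem affine_mapsTo_Iic_or_Ici {s : Set ℝ} (m c : ℝ) (hs : s = Iic x ∨ s = Ici x) :
    MapsTo (fun y => m * y + c) s (Iic (m * x + c)) ∨
      MapsTo (fun y => m * y + c) s (Ici (m * x + c)) := by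
  rcases le_total 0 m with hm | hm
  · have hmono : Monotone fun y => m * y + c := fun a b hab => by nlinarith
    rcases hs with rfl | rfl
    exacts [Or.inl hmono.mapsTo_Iic, Or.inr hmono.mapsTo_Ici]
  · have hanti : Antitone fun y => m * y + c := fun a b hab => by nlinarith
    rcases hs with rfl | rfl
    exacts [Or.inr hanti.mapsTo_Iic, Or.inl hanti.mapsTo_Ici]

theorem IsPiecewiseAffineAt.comp (hg : IsPiecewiseAffineAt g (f x))
    (hf : IsPiecewiseAffineAt f x) : IsPiecewiseAffineAt (g ∘ f) x := by
  have key : ∀ s, (s = Iic x ∨ s = Ici x) → HasAffineGermWithin f s x →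
      HasAffineGermWithin (g ∘ f) s x := by
    rintro s hs ⟨m, c, hm, hfA⟩
    have hx : x ∈ s := by rcases hs with rfl | rfl <;> simp
    have hfx : f x = m * x + c := hfA.eq_of_nhdsWithin hx
    rcases affine_mapsTo_Iic_or_Ici m c hs with hst | hst <;> rw [← hfx] at hst
    exacts [hg.1.comp hm hfA hx hst, hg.2.comp hm hfA hx hst]
  exact ⟨key _ (Or.inl rfl) hf.1, key _ (Or.inr rfl) hf.2⟩

end AffineGerms

theorem exists_forall_exists_iterate_mem {X : Type*} [TopologicalSpace X] [T2Space X]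
    {f : X → X} {P : Set X → Prop} {U : ℕ → Set X} (hP : ∀ K, P K → IsCompact K ∧ K.Nonempty)
    (hstep : ∀ K j, P K → ∃ K' n, P K' ∧ K' ⊆ K ∧ MapsTo f^[n] K' (U j)) {K₀ : Set X}
    (hK₀ : P K₀) : ∃ z ∈ K₀, ∀ j, ∃ n, f^[n] z ∈ U j := by
  choose! F N hF using hstep
  let K : ℕ → Set X := fun j => Nat.rec K₀ (fun j Kj => F Kj j) j
  have hK : ∀ j, P (K j) := by
    intro j
    induction j with
    | zero => exact hK₀
    | succ j ih => exact (hF _ j ih).1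
  obtain ⟨z, hz⟩ := IsCompact.nonempty_iInter_of_sequence_nonempty_isCompact_isClosed K
    (fun j => (hF _ j (hK j)).2.1) (fun j => (hP _ (hK j)).2) (hP _ hK₀).1
    (fun j => (hP _ (hK j)).1.isClosed)
  rw [mem_iInter] at hz
  exact ⟨z, hz 0, fun j => ⟨N (K j) j, (hF _ j (hK j)).2.2 (hz (j + 1))⟩⟩

theorem AffOn.apply_le_max {T : ℝ → ℝ} {u v t : ℝ} (h : AffOn T u v) (ht : t ∈ Icc u v) :
    T t ≤ max (T u) (T v) := by
  obtain ⟨m, c, hT⟩ := h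
  have huv : u ≤ v := ht.1.trans ht.2
  rw [hT t ht, hT u (left_mem_Icc.2 huv), hT v (right_mem_Icc.2 huv)]
  rcases le_total 0 m with hm | hm
  · exact le_max_of_le_right (by nlinarith [ht.2])
  · exact le_max_of_le_left (by nlinarith [ht.1])

namespace SawMapSetup

variable (S : SawMapSetup)

theorem p_antitone : Antitone S.p :=
  antitone_nat_of_succ_le fun k => (S.hp_dec k).le

theorem pstar_pos : 0 < S.p S.kstar := S.hp_pos _

theorem pstar_lt_r0 : S.p S.kstar < S.r 0 :=
  (S.p_antitone (Nat.zero_le _)).trans_lt S.hp0r0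

theorem q_succ_lt_r (k : ℕ) : S.q (k + 1) < S.r k := by
  rcases Nat.eq_zero_or_pos k with rfl | hk
  exacts [S.hq1r0, S.hqr k hk]

theorem affOn_rising (k : ℕ) : AffOn S.T (S.q (k + 1)) (S.r k) := by
  rcases Nat.eq_zero_or_pos k with rfl | hk
  exacts [S.haff0, S.haff1 k hk]

theorem alpha_pos (k : ℕ) : 0 < S.alpha k :=
  div_pos (S.hp_pos k) (sub_pos.2 (S.q_succ_lt_r k))

theorem T_eq_alpha_mul {k : ℕ} {t : ℝ} (ht : t ∈ Icc (S.q (k + 1)) (S.r k)) :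
    S.T t = S.alpha k * (t - S.q (k + 1)) := by
  obtain ⟨m, c, hT⟩ := S.affOn_rising k
  have hqr := S.q_succ_lt_r k
  have hq : m * S.q (k + 1) + c = 0 := by rw [← hT _ ⟨le_rfl, hqr.le⟩, S.hTq _ (by omega)]
  have hr : m * S.r k + c = S.p k := by rw [← hT _ ⟨hqr.le, le_rfl⟩, S.hTr]
  have hm : m = S.alpha k := by
    rw [alpha, eq_div_iff (sub_ne_zero.2 hqr.ne')]
    linear_combination hr - hq
  rw [hT t ht, ← hm]
  linear_combination hq

theorem e_eq_alpha_mul {k : ℕ} (hk : 1 ≤ k) : S.e k = S.alpha k * (S.e k - S.q (k + 1)) := by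
  have he := S.he_mem k hk
  rw [← S.T_eq_alpha_mul ⟨he.1.le, he.2.le⟩, S.he_fix k hk]

/-- The break points `r 0 > q 1 > r 1 > q 2 > ⋯` of `T`: `T` is affine between consecutive ones. -/
def node (i : ℕ) : ℝ := if Even i then S.r (i / 2) else S.q (i / 2 + 1)

theorem node_two_mul (k : ℕ) : S.node (2 * k) = S.r k := by simp [node]

theorem node_two_mul_add_one (k : ℕ) : S.node (2 * k + 1) = S.q (k + 1) := by
  simp only [node, Nat.not_even_bit1, if_false]
  congr 2
  omega

theorem affOn_node (i : ℕ) : S.node (i + 1) < S.node i ∧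
    AffOn S.T (S.node (i + 1)) (S.node i) ∧ S.T (S.node (i + 1)) ≠ S.T (S.node i) := by
  obtain ⟨k, rfl | rfl⟩ := Nat.even_or_odd' i
  · rw [node_two_mul, node_two_mul_add_one, S.hTq _ (by omega), S.hTr]
    exact ⟨S.q_succ_lt_r k, S.affOn_rising k, (S.hp_pos k).ne⟩
  · rw [show 2 * k + 1 + 1 = 2 * (k + 1) by ring, node_two_mul, node_two_mul_add_one,
      S.hTq _ (by omega), S.hTr]
    exact ⟨S.hrq _ (by omega), S.haff2 _ (by omega), (S.hp_pos _).ne'⟩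

theorem exists_eqOn_node (i : ℕ) :
    ∃ m c : ℝ, m ≠ 0 ∧ EqOn S.T (fun t => m * t + c) (Icc (S.node (i + 1)) (S.node i)) := by
  obtain ⟨hlt, ⟨m, c, hT⟩, hne⟩ := S.affOn_node i
  refine ⟨m, c, fun hm => hne ?_, hT⟩
  rw [hT _ (left_mem_Icc.2 hlt.le), hT _ (right_mem_Icc.2 hlt.le), hm]
  ring

theorem exists_node_lt {x : ℝ} (hx : 0 < x) : ∃ i, S.node i < x := by
  obtain ⟨k, hk⟩ := (S.hr_lim.eventually (gt_mem_nhds hx)).exists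
  exact ⟨2 * k, by rwa [node_two_mul]⟩

theorem exists_node_lt_le {x : ℝ} (hx0 : 0 < x) (hxr : x ≤ S.r 0) :
    ∃ i, S.node (i + 1) < x ∧ x ≤ S.node i := by
  obtain ⟨i, hi, hi1⟩ := Nat.exists_not_and_succ_of_not_zero_of_exists
    (p := fun i => S.node i < x) (by simpa [node] using hxr) (S.exists_node_lt hx0)
  exact ⟨i, hi1, not_lt.1 hi⟩

theorem exists_node_le_lt {x : ℝ} (hx0 : 0 < x) (hxr : x < S.r 0) :
    ∃ i, S.node (i + 1) ≤ x ∧ x < S.node i := by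
  obtain ⟨i, hlt⟩ := S.exists_node_lt hx0
  obtain ⟨i, hi, hi1⟩ := Nat.exists_not_and_succ_of_not_zero_of_exists
    (p := fun i => S.node i ≤ x) (by simpa [node] using hxr) ⟨i, hlt.le⟩
  exact ⟨i, hi1, not_le.1 hi⟩

theorem isPiecewiseAffineAt_T {x : ℝ} (hx0 : 0 < x) (hxr : x < S.r 0) :
    IsPiecewiseAffineAt S.T x := by
  constructor
  · obtain ⟨i, hi1, hi⟩ := S.exists_node_lt_le hx0 hxr.le
    obtain ⟨m, c, hm, hT⟩ := S.exists_eqOn_node i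
    exact ⟨m, c, hm, eventuallyEq_of_mem (Icc_mem_nhdsLE hi1) (hT.mono (Icc_subset_Icc_right hi))⟩
  · obtain ⟨i, hi1, hi⟩ := S.exists_node_le_lt hx0 hxr
    obtain ⟨m, c, hm, hT⟩ := S.exists_eqOn_node i
    exact ⟨m, c, hm, eventuallyEq_of_mem (Icc_mem_nhdsGE hi) (hT.mono (Icc_subset_Icc_left hi1))⟩

theorem T_le_pstar_of_mem_rising {k : ℕ} {x : ℝ} (hx : x ∈ S.Jstar)
    (hxk : x ∈ Icc (S.q (k + 1)) (S.r k)) : S.T x ≤ S.p S.kstar := by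
  have hTx := S.T_eq_alpha_mul hxk
  have hqr := S.q_succ_lt_r k
  have hαpq : S.alpha k * (S.r k - S.q (k + 1)) = S.p k :=
    div_mul_cancel₀ _ (sub_ne_zero.2 hqr.ne')
  rcases le_or_gt S.kstar k with hk | hk
  · calc S.T x = S.alpha k * (x - S.q (k + 1)) := hTx
      _ ≤ S.alpha k * (S.r k - S.q (k + 1)) := by gcongr; exacts [(S.alpha_pos k).le, hxk.2]
      _ = S.p k := hαpq
      _ ≤ S.p S.kstar := S.p_antitone hk
  refine le_trans ?_ hx.2
  rcases Nat.eq_zero_or_pos k with rfl | hk0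
  · -- on `[q 1, r 0]` the graph of `T` joins `(q 1, 0)` and `(r 0, p 0)`, both below the diagonal
    have hcross : S.T x * (S.r 0 - S.q 1) = S.p 0 * (x - S.q 1) := by
      rw [hTx, ← hαpq]
      ring
    nlinarith [mul_nonneg (sub_nonneg.2 hxk.1) (sub_nonneg.2 S.hp0r0.le),
      mul_nonneg (S.hq_pos 1 le_rfl).le (sub_nonneg.2 hxk.2), sub_pos.2 hqr]
  · -- `x` lies left of the repelling fixed point `e k`, where `T` moves points to the left
    have hxe : x < S.e k := hx.2.trans_lt ((S.p_antitone (show k + 1 ≤ S.kstar by omega)).trans_lt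
      (by simpa using S.hp_e_small (by omega) (k + 1) (by omega) (by omega)))
    have hα : 1 < S.alpha k := S.halpha1 k hk0
    have he := S.e_eq_alpha_mul hk0
    nlinarith [mul_pos (sub_pos.2 hα) (sub_pos.2 hxe)]

theorem T_le_pstar_of_mem_falling {k : ℕ} (hk : 1 ≤ k) {x : ℝ} (hx : x ∈ S.Jstar)
    (hxk : x ∈ Icc (S.r k) (S.q k)) : S.T x ≤ S.p S.kstar := by
  rcases le_or_gt S.kstar k with hks | hks
  · have hmax := (S.haff2 k hk).apply_le_max hxk
    rw [S.hTr, S.hTq k hk, max_eq_left (S.hp_pos k).le] at hmax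
    exact hmax.trans (S.p_antitone hks)
  · have hpe : S.p (k + 1) < S.e k := by
      simpa using S.hp_e_small (by omega) (k + 1) (by omega) (by omega)
    have := S.p_antitone (show k + 1 ≤ S.kstar by omega)
    linarith [(S.he_mem k hk).2, hx.2, hxk.1]

theorem mapsTo_T_Jstar : MapsTo S.T S.Jstar S.Jstar := by
  intro x hx
  have hx' : x ∈ Icc 0 (S.r 0) := ⟨hx.1, hx.2.trans S.pstar_lt_r0.le⟩
  refine ⟨(S.hTJ hx').1, ?_⟩
  rcases hx.1.eq_or_lt with rfl | hx0
  · rw [S.hT0]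
    exact S.pstar_pos.le
  obtain ⟨i, hi1, hi⟩ := S.exists_node_lt_le hx0 hx'.2
  obtain ⟨k, rfl | rfl⟩ := Nat.even_or_odd' i
  · rw [node_two_mul_add_one] at hi1
    rw [node_two_mul] at hi
    exact S.T_le_pstar_of_mem_rising hx ⟨hi1.le, hi⟩
  · rw [show 2 * k + 1 + 1 = 2 * (k + 1) by ring, node_two_mul] at hi1
    rw [node_two_mul_add_one] at hi
    exact S.T_le_pstar_of_mem_falling (by omega) hx ⟨hi1.le, hi⟩

theorem zero_mem_Omega : (0 : ℝ) ∈ S.Omega :=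
  ⟨⟨le_rfl, S.pstar_pos.le⟩, 1, le_rfl, by simp [S.hT0]⟩

theorem q_mem_Omega {k : ℕ} (hk : 1 ≤ k) (hq : S.q k ≤ S.p S.kstar) : S.q k ∈ S.Omega :=
  ⟨⟨(S.hq_pos k hk).le, hq⟩, 1, le_rfl, by simp [S.hTq k hk]⟩

theorem mapsTo_T_Omega : MapsTo S.T S.Omega S.Omega := by
  rintro x ⟨hx, n, hn, h0⟩
  refine ⟨S.mapsTo_T_Jstar hx, ?_⟩
  obtain ⟨n, rfl⟩ := Nat.exists_eq_add_of_le' hn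
  rw [Function.iterate_succ_apply] at h0
  rcases n.eq_zero_or_pos with rfl | hn'
  · exact ⟨1, le_rfl, by simp_all [S.hT0]⟩
  · exact ⟨n, hn', h0⟩

theorem Sig_subset_Jstar : S.Sig ⊆ S.Jstar :=
  closure_minimal (fun _ hx => hx.1) isClosed_Icc

theorem zero_mem_Sig : (0 : ℝ) ∈ S.Sig := subset_closure S.zero_mem_Omega

theorem Sig_subset_closure_Omega_diff_zero : S.Sig ⊆ closure (S.Omega \ {0}) := by
  refine closure_minimal (fun x hx => ?_) isClosed_closure
  rcases eq_or_ne x 0 with rfl | hx0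
  · refine mem_closure_of_tendsto S.hq_lim ?_
    filter_upwards [eventually_ge_atTop 1, S.hq_lim.eventually (eventually_le_nhds S.pstar_pos)]
      with k hk hq
    exact ⟨S.q_mem_Omega hk hq, (S.hq_pos k hk).ne'⟩
  · exact subset_closure ⟨hx, hx0⟩

theorem mapsTo_T_Sig : MapsTo S.T S.Sig S.Sig := by
  intro x hx
  rcases eq_or_ne x 0 with rfl | hx0
  · rw [S.hT0]
    exact S.zero_mem_Sig
  have hxJ := S.Sig_subset_Jstar hx
  have hT := S.isPiecewiseAffineAt_T (lt_of_le_of_ne hxJ.1 hx0.symm)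
    (hxJ.2.trans_lt S.pstar_lt_r0)
  exact closure_mono S.mapsTo_T_Omega.image_subset (mem_closure_image hT.continuousAt hx)

theorem isPiecewiseAffineAt_iterate (n : ℕ) {x : ℝ} (hx : x ∈ S.Jstar)
    (h : ∀ i < n, S.T^[i] x ≠ 0) : IsPiecewiseAffineAt S.T^[n] x := by
  induction n generalizing x with
  | zero => exact isPiecewiseAffineAt_id
  | succ n ih =>
    have hx0 : 0 < x := lt_of_le_of_ne hx.1 (h 0 n.succ_pos).symm
    rw [Function.iterate_succ]
    refine (ih (S.mapsTo_T_Jstar hx) fun i hi => ?_).comp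
      (S.isPiecewiseAffineAt_T hx0 (hx.2.trans_lt S.pstar_lt_r0))
    rw [← Function.iterate_succ_apply]
    exact h (i + 1) (by omega)

def Covers (L L' : ℝ) : Prop :=
  ∃ n I, I ⊆ Icc 0 L ∧ AffineOnto S.T^[n] I (Icc 0 L')

section Covers

variable {S} {L L' L'' : ℝ}

theorem Covers.refl (L : ℝ) : S.Covers L L :=
  ⟨0, Icc 0 L, subset_rfl, affineOnto_id _⟩

theorem Covers.trans (h : S.Covers L L') (h' : S.Covers L' L'') : S.Covers L L'' := by
  obtain ⟨n, I, hI, hn⟩ := h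
  obtain ⟨n', I', hI', hn'⟩ := h'
  refine ⟨n' + n, I ∩ S.T^[n] ⁻¹' I', inter_subset_left.trans hI, ?_⟩
  rw [Function.iterate_add]
  exact hn'.comp hn hI'

theorem Covers.mono (h : S.Covers L L') (hL : L ≤ L'') : S.Covers L'' L' :=
  let ⟨n, I, hI, hn⟩ := h
  ⟨n, I, hI.trans (Icc_subset_Icc_right hL), hn⟩

end Covers

theorem covers_T_of_rising {k : ℕ} {L : ℝ} (hqL : S.q (k + 1) < L) (hLr : L ≤ S.r k) :
    S.Covers L (S.T L) := by
  refine ⟨1, Icc (S.q (k + 1)) L, Icc_subset_Icc_left (S.hq_pos _ (by omega)).le, ?_⟩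
  have hT : EqOn S.T^[1] (fun t => S.alpha k * t + -(S.alpha k * S.q (k + 1)))
      (Icc (S.q (k + 1)) L) := fun t ht => by
    rw [Function.iterate_one, S.T_eq_alpha_mul ⟨ht.1, ht.2.trans hLr⟩]
    ring
  have hTL : 0 ≤ S.T L := by
    rw [S.T_eq_alpha_mul ⟨hqL.le, hLr⟩]
    exact mul_nonneg (S.alpha_pos k).le (sub_nonneg.2 hqL.le)
  have h := affineOnto_Icc hqL.le (S.alpha_pos k).ne' hT
  rwa [Function.iterate_one, S.hTq _ (by omega), uIcc_of_le hTL] at h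

theorem covers_p_of_e_lt {k : ℕ} (hk : 1 ≤ k) {L : ℝ} (hL : S.e k < L) : S.Covers L (S.p k) := by
  have hα : 1 < S.alpha k := S.halpha1 k hk
  have he := S.he_mem k hk
  have base : ∀ L, S.r k ≤ L → S.Covers L (S.p k) := fun L hL =>
    (S.hTr k ▸ S.covers_T_of_rising (S.q_succ_lt_r k) le_rfl).mono hL
  -- `i` bounds the number of expanding steps away from `e k` needed to get past `r k`
  suffices ∀ i : ℕ, ∀ L, S.e k < L → S.r k - S.e k ≤ S.alpha k ^ i * (L - S.e k) →
      S.Covers L (S.p k) by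
    obtain ⟨i, hi⟩ := pow_unbounded_of_one_lt ((S.r k - S.e k) / (L - S.e k)) hα
    exact this i L hL ((div_le_iff₀ (sub_pos.2 hL)).1 hi.le)
  intro i
  induction i with
  | zero =>
    intro L _ hi
    exact base L (by linarith)
  | succ i ih =>
    intro L hL hi
    rcases le_or_gt (S.r k) L with hrL | hLr
    · exact base L hrL
    have hTL : S.T L - S.e k = S.alpha k * (L - S.e k) := by
      linear_combination S.T_eq_alpha_mul ⟨(he.1.trans hL).le, hLr.le⟩ - S.e_eq_alpha_mul hk
    refine (S.covers_T_of_rising (he.1.trans hL) hLr.le).trans (ih _ ?_ ?_)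
    · nlinarith
    · rwa [hTL, ← mul_assoc, ← pow_succ]

theorem covers_pstar {L : ℝ} (hL : 0 < L) : S.Covers L (S.p S.kstar) := by
  have hdesc : ∀ d, S.Covers (S.p (S.kstar + d)) (S.p S.kstar) := by
    intro d
    induction d with
    | zero => exact Covers.refl _
    | succ d ih =>
      rw [← add_assoc]
      exact (S.covers_p_of_e_lt (by have := S.hkstar; omega)
        (by simpa using S.hp_e_big (S.kstar + d + 1) (by omega))).trans ih
  obtain ⟨j, hrj, hj⟩ :=
    ((S.hr_lim.eventually (gt_mem_nhds hL)).and (eventually_ge_atTop S.kstar)).exists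
  obtain ⟨d, rfl⟩ := Nat.exists_eq_add_of_le hj
  exact (S.covers_p_of_e_lt (by have := S.hkstar; omega)
    ((S.he_mem _ (by have := S.hkstar; omega)).2.trans hrj)).trans (hdesc d)

theorem exists_affineOnto_near_Omega {w : ℝ} (hw : w ∈ S.Omega) (hw0 : w ≠ 0) {δ : ℝ}
    (hδ : 0 < δ) : ∃ N, 1 ≤ N ∧ ∃ I ⊆ Icc (w - δ) w ∩ S.Jstar, AffineOnto S.T^[N] I S.Jstar := by
  classical
  obtain ⟨hwJ, hex⟩ := hw
  obtain ⟨hn, hn0⟩ := Nat.find_spec hex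
  set n := Nat.find hex
  have hfirst : ∀ i < n, S.T^[i] w ≠ 0 := by
    intro i hi h0
    rcases i.eq_zero_or_pos with rfl | hi0
    · exact hw0 h0
    · exact Nat.find_min hex hi ⟨hi0, h0⟩
  obtain ⟨m, c, hm, hA⟩ := (S.isPiecewiseAffineAt_iterate n hwJ hfirst).1
  have hpos : ∀ᶠ t in 𝓝[≤] w, max (w - δ) 0 < t := eventually_nhdsWithin_of_eventually_nhds
    (eventually_gt_nhds (max_lt (by linarith) (lt_of_le_of_ne hwJ.1 hw0.symm)))
  obtain ⟨l, hlw, hl⟩ := mem_nhdsLE_iff_exists_Icc_subset.1 (hA.and hpos)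
  have hlJ : Icc l w ⊆ Icc (w - δ) w ∩ S.Jstar := fun t ht => by
    have := max_lt_iff.1 (hl ht).2
    exact ⟨⟨this.1.le, ht.2⟩, ⟨this.2.le, ht.2.trans hwJ.2⟩⟩
  have honto := affineOnto_Icc hlw.le hm fun t ht => (hl ht).1
  have hl0 : 0 ≤ S.T^[n] l :=
    (S.mapsTo_T_Jstar.iterate n (hlJ (left_mem_Icc.2 hlw.le)).2).1
  rw [hn0, uIcc_of_ge hl0] at honto
  have hL : 0 < S.T^[n] l := by
    have hAl : S.T^[n] l = m * l + c := (hl (left_mem_Icc.2 hlw.le)).1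
    have hAw : S.T^[n] w = m * w + c := hA.eq_of_nhdsWithin self_mem_Iic
    exact hl0.lt_of_ne fun h => hlw.ne (mul_left_cancel₀ hm (by linarith))
  obtain ⟨M, I, hI, hM⟩ := S.covers_pstar hL
  refine ⟨M + n, by omega, Icc l w ∩ S.T^[n] ⁻¹' I, inter_subset_left.trans hlJ, ?_⟩
  rw [Function.iterate_add]
  exact hM.comp honto hI

theorem exists_affineOnto_near {x : ℝ} (hx : x ∈ S.Sig) {ε : ℝ} (hε : 0 < ε) :
    ∃ N, 1 ≤ N ∧ ∃ I ⊆ S.Jstar ∩ Metric.ball x ε, AffineOnto S.T^[N] I S.Jstar := by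
  obtain ⟨w, ⟨hw, hw0⟩, hxw⟩ :=
    Metric.mem_closure_iff.1 (S.Sig_subset_closure_Omega_diff_zero hx) (ε / 2) (half_pos hε)
  obtain ⟨N, hN, I, hI, h⟩ := S.exists_affineOnto_near_Omega hw hw0 (half_pos hε)
  refine ⟨N, hN, I, fun t ht => ⟨(hI ht).2, ?_⟩, h⟩
  have := (hI ht).1
  rw [Real.dist_eq, abs_lt] at hxw
  rw [Metric.mem_ball, Real.dist_eq, abs_lt]
  constructor <;> linarith [this.1, this.2]

theorem exists_mem_Omega_iterate_eq {N : ℕ} {I : Set ℝ} {z : ℝ}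
    (h : AffineOnto S.T^[N] I S.Jstar) (hI : I ⊆ S.Jstar) (hz : z ∈ S.Omega) :
    ∃ y ∈ I ∩ S.Omega, S.T^[N] y = z := by
  obtain ⟨-, -, -, -, himg⟩ := h
  obtain ⟨y, hy, rfl⟩ : z ∈ S.T^[N] '' I := himg ▸ hz.1
  obtain ⟨n, hn, h0⟩ := hz.2
  exact ⟨y, ⟨hy, hI hy, n + N, by omega, by rwa [Function.iterate_add_apply]⟩, rfl⟩

theorem exists_periodicPt_near {x : ℝ} (hx : x ∈ S.Sig) {ε : ℝ} (hε : 0 < ε) :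
    ∃ y ∈ S.Sig, |x - y| < ε ∧ ∃ n, 1 ≤ n ∧ S.T^[n] y = y := by
  have hp := S.pstar_pos
  set ρ := min ε (S.p S.kstar / 2)
  obtain ⟨N, hN, I, hI, h⟩ := S.exists_affineOnto_near hx (lt_min hε (half_pos hp) : 0 < ρ)
  have hsmall : ∀ t ∈ I, ∀ t' ∈ I, |t - t'| < |0 - S.p S.kstar| := by
    intro t ht t' ht'
    have h1 := (hI ht).2
    have h2 := (hI ht').2
    rw [Metric.mem_ball, Real.dist_eq] at h1 h2
    rw [zero_sub, abs_neg, abs_of_pos hp]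
    calc |t - t'| ≤ |t - x| + |x - t'| := abs_sub_le _ _ _
      _ < ρ + ρ := add_lt_add h1 (by rwa [abs_sub_comm])
      _ ≤ S.p S.kstar := by linarith [min_le_right ε (S.p S.kstar / 2)]
  obtain ⟨m, c, hm, hA⟩ := h.exists_one_lt_abs_slope (left_mem_Icc.2 hp.le)
    (right_mem_Icc.2 hp.le) hsmall
  obtain ⟨y, ⟨hyI, hySig⟩, hy⟩ := exists_isFixedPt_mem_closure hm hA (h.isClosed isClosed_Icc)
    ⟨0, S.zero_mem_Omega⟩ fun z hz =>
      S.exists_mem_Omega_iterate_eq h (hI.trans inter_subset_left) hz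
  refine ⟨y, hySig, ?_, N, hN, hy⟩
  have hyx := (hI hyI).2
  rw [Metric.mem_ball, Real.dist_eq] at hyx
  rw [abs_sub_comm]
  exact hyx.trans_le (min_le_left _ _)

theorem sensitive_dependence : ∃ b > 0, ∀ x ∈ S.Sig, ∀ ε > 0, ∃ y ∈ S.Sig, |x - y| < ε ∧
    ∃ k : ℕ, b < |S.T^[k] x - S.T^[k] y| := by
  set z := S.q (S.kstar + 1)
  have hz0 : 0 < z := S.hq_pos _ (by omega)
  have hz : z ∈ S.Omega :=
    S.q_mem_Omega (by omega) ((S.hqr _ S.hkstar).trans (S.hpr _ S.hkstar)).le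
  refine ⟨z / 3, by positivity, fun x hx ε hε => ?_⟩
  obtain ⟨N, -, I, hI, h⟩ := S.exists_affineOnto_near hx hε
  have hnear : ∀ y ∈ I, |x - y| < ε := fun y hy => by
    have := (hI hy).2
    rwa [Metric.mem_ball, Real.dist_eq, abs_sub_comm] at this
  obtain ⟨y₀, ⟨hy₀, hy₀Ω⟩, hTy₀⟩ :=
    S.exists_mem_Omega_iterate_eq h (hI.trans inter_subset_left) S.zero_mem_Omega
  obtain ⟨y₁, ⟨hy₁, hy₁Ω⟩, hTy₁⟩ :=
    S.exists_mem_Omega_iterate_eq h (hI.trans inter_subset_left) hz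
  rcases lt_or_ge (z / 3) |S.T^[N] x - S.T^[N] y₀| with h₀ | h₀
  · exact ⟨y₀, subset_closure hy₀Ω, hnear y₀ hy₀, N, h₀⟩
  · refine ⟨y₁, subset_closure hy₁Ω, hnear y₁ hy₁, N, ?_⟩
    rw [hTy₀, sub_zero] at h₀
    have := abs_sub_abs_le_abs_sub z (S.T^[N] x)
    rw [abs_of_pos hz0, abs_sub_comm] at this
    rw [hTy₁]
    linarith

theorem exists_dense_orbit :
    ∃ z ∈ S.Sig, ∀ x ∈ S.Sig, ∀ ε > 0, ∃ n : ℕ, |S.T^[n] z - x| < ε := by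
  have : Nonempty S.Sig := ⟨⟨0, S.zero_mem_Sig⟩⟩
  obtain ⟨u, hu⟩ := TopologicalSpace.exists_dense_seq S.Sig
  -- `U (pair i k)` is the ball of radius `1 / (k + 1)` about `u i`
  set U : ℕ → Set ℝ := fun j => Metric.ball (u j.unpair.1) ((j.unpair.2 : ℝ) + 1)⁻¹
  set P : Set ℝ → Prop :=
    fun K => ∃ N I, I ⊆ S.Jstar ∧ AffineOnto S.T^[N] I S.Jstar ∧ K = I ∩ S.Sig
  have hP : ∀ K, P K → IsCompact K ∧ K.Nonempty := by
    rintro _ ⟨N, I, hI, h, rfl⟩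
    obtain ⟨y, ⟨hy, hyΩ⟩, -⟩ := S.exists_mem_Omega_iterate_eq h hI S.zero_mem_Omega
    exact ⟨(isCompact_Icc.of_isClosed_subset (h.isClosed isClosed_Icc) hI).inter_right
      isClosed_closure, y, hy, subset_closure hyΩ⟩
  have hstep : ∀ K j, P K → ∃ K' n, P K' ∧ K' ⊆ K ∧ MapsTo S.T^[n] K' (U j) := by
    rintro _ j ⟨N, I, hI, h, rfl⟩
    obtain ⟨N', -, I', hI', h'⟩ :=
      S.exists_affineOnto_near (u j.unpair.1).2 (inv_pos.2 (Nat.cast_add_one_pos j.unpair.2))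
    refine ⟨(I ∩ S.T^[N] ⁻¹' I') ∩ S.Sig, N, ⟨N' + N, _, inter_subset_left.trans hI, ?_, rfl⟩,
      inter_subset_inter_left _ inter_subset_left, fun t ht => (hI' ht.1.2).2⟩
    rw [Function.iterate_add]
    exact h'.comp h (hI'.trans inter_subset_left)
  obtain ⟨z, hz, hzU⟩ :=
    exists_forall_exists_iterate_mem hP hstep ⟨0, S.Jstar, subset_rfl, affineOnto_id _, rfl⟩
  refine ⟨z, hz.2, fun x hx ε hε => ?_⟩
  obtain ⟨i, hi⟩ := Metric.denseRange_iff.1 hu ⟨x, hx⟩ (ε / 2) (half_pos hε)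
  obtain ⟨k, hk⟩ := exists_nat_one_div_lt (half_pos hε)
  obtain ⟨n, hn⟩ := hzU (Nat.pair i k)
  simp only [U, Nat.unpair_pair, Metric.mem_ball] at hn
  rw [Subtype.dist_eq] at hi
  refine ⟨n, ?_⟩
  rw [← Real.dist_eq]
  calc dist (S.T^[n] z) x ≤ dist (S.T^[n] z) (u i) + dist (u i : ℝ) x := dist_triangle _ _ _
    _ < ε / 2 + ε / 2 := add_lt_add (hn.trans (by rwa [← one_div])) (by rwa [dist_comm])
    _ = ε := add_halves ε

end SawMapSetup

/-- Under the saw map setup, `Σ` is a chaotic invariant set for `T`. -/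
theorem Sig_chaotic (S : SawMapSetup) :
    IsChaoticInvariantSet S.T S.Sig :=
  ⟨isClosed_closure, S.mapsTo_T_Sig, fun _ hx _ hε => S.exists_periodicPt_near hx hε,
    S.sensitive_dependence, S.exists_dense_orbit⟩
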